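/- Generation of the concrete BCH cube category □: let G be the smallest family of subsets G(J,I) ⊆ □(J,I) that contains all identities id_I, all face maps k_I (for both endpoints k ∈ Fin 2), all degeneracies R_I, all symmetries S_I, and is closed under composition (f ∈ G(J,I), g ∈ G(K,J) implies f ∘ g ∈ G(K,I)) and under suc (f ∈ G(J,I) implies suc f ∈ G(1+J,1+I)). Then G(J,I) = □(J,I) for all J and I. -/

import Mathlib

open CategoryTheory

namespace BCH

/-- The injectivity condition on the preimage of the left summand. -/
def IsCube {J I : ℕ} (f : Fin I → Fin J ⊕ Fin 2) : Prop :=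
  ∀ ⦃i i' : Fin I⦄ ⦃j : Fin J⦄, f i = Sum.inl j → f i' = Sum.inl j → i = i'

/-- A morphism of the BCH cube category `□(J,I)`. -/
def Hom (J I : ℕ) : Type :=
  {f : Fin I → Fin J ⊕ Fin 2 // IsCube f}

theorem Hom.ext {J I} {f g : Hom J I} (h : f.1 = g.1) : f = g := Subtype.ext h

/-- The identity morphism `id_I ∈ □(I,I)`. -/
def idH (I : ℕ) : Hom I I :=
  ⟨fun i => Sum.inl i, by intro i i' j h h'; simp_all⟩

/-- Composition: `compH f g` is the paper's `f ∘ g ∈ □(K,I)`,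
`g ∈ □(K,J)` followed by `f ∈ □(J,I)`. -/
def compH {K J I : ℕ} (f : Hom J I) (g : Hom K J) : Hom K I :=
  ⟨fun i => Sum.elim g.1 Sum.inr (f.1 i), by
    intro i i' k h h'
    dsimp only at h h'
    rcases hf : f.1 i with j | e
    · rcases hf' : f.1 i' with j' | e'
      · rw [hf] at h; rw [hf'] at h'
        simp only [Sum.elim_inl] at h h'
        have hjj : j = j' := g.2 h h'
        subst hjj
        exact f.2 hf hf'
      · rw [hf'] at h'; simp at h'
    · rw [hf] at h; simp at h⟩

/-- `suc f ∈ □(1+J,1+I)` for `f ∈ □(J,I)`. -/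
def sucH {J I : ℕ} (f : Hom J I) : Hom (1+J) (1+I) :=
  ⟨fun i =>
    if h : (i : ℕ) = 0 then Sum.inl ⟨0, by omega⟩
    else Sum.elim (fun j => Sum.inl ⟨1 + j.1, by have := j.2; omega⟩) Sum.inr
      (f.1 ⟨i.1 - 1, by have := i.2; omega⟩), by
    intro i i' j h h'
    dsimp only at h h'
    by_cases hi : (i : ℕ) = 0 <;> by_cases hi' : (i' : ℕ) = 0
    · exact Fin.ext (by omega)
    · rw [dif_pos hi] at h
      rw [dif_neg hi'] at h'
      rcases hf' : f.1 ⟨i'.1 - 1, by have := i'.2; omega⟩ with a | e <;> rw [hf'] at h'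
      · simp only [Sum.elim_inl, Sum.inl.injEq] at h h'
        rw [← h'] at h
        simp only [Sum.inl.injEq, Fin.ext_iff] at h
        omega
      · simp at h'
    · rw [dif_neg hi] at h
      rw [dif_pos hi'] at h'
      rcases hf : f.1 ⟨i.1 - 1, by have := i.2; omega⟩ with a | e <;> rw [hf] at h
      · simp only [Sum.elim_inl, Sum.inl.injEq] at h h'
        rw [← h'] at h
        simp only [Sum.inl.injEq, Fin.ext_iff] at h
        omega
      · simp at h
    · rw [dif_neg hi] at h
      rw [dif_neg hi'] at h'
      rcases hf : f.1 ⟨i.1 - 1, by have := i.2; omega⟩ with a | e <;> rw [hf] at h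
      · rcases hf' : f.1 ⟨i'.1 - 1, by have := i'.2; omega⟩ with a' | e' <;> rw [hf'] at h'
        · simp only [Sum.elim_inl, Sum.inl.injEq] at h h'
          rw [← h'] at h
          simp only [Fin.ext_iff] at h
          have haa : a = a' := Fin.ext (by omega)
          subst haa
          have := f.2 hf hf'
          simp only [Fin.ext_iff] at this
          exact Fin.ext (by omega)
        · simp at h'
      · simp at h⟩

/-- The face map `k_I ∈ □(I,1+I)` for an endpoint `k : Fin 2`. -/
def faceH (k : Fin 2) (I : ℕ) : Hom I (1+I) :=
  ⟨fun i =>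
    if h : (i : ℕ) = 0 then Sum.inr k
    else Sum.inl ⟨i.1 - 1, by have := i.2; omega⟩, by
    intro i i' j h h'
    dsimp only at h h'
    split_ifs at h h' with h1 h2 <;> simp_all [Fin.ext_iff] <;> omega⟩

/-- The degeneracy `R_I ∈ □(1+I,I)`. -/
def degH (I : ℕ) : Hom (1+I) I :=
  ⟨fun i => Sum.inl ⟨1 + i.1, by have := i.2; omega⟩, by
    intro i i' j h h'
    simp only [Sum.inl.injEq, Fin.ext_iff] at h h'
    exact Fin.ext (by omega)⟩

/-- The symmetry `S_I ∈ □(2+I,2+I)` (with `2+I` written as `1+(1+I)`). -/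
def symH (I : ℕ) : Hom (1+(1+I)) (1+(1+I)) :=
  ⟨fun i =>
    if (i : ℕ) = 0 then Sum.inl ⟨1, by omega⟩
    else if (i : ℕ) = 1 then Sum.inl ⟨0, by omega⟩
    else Sum.inl i, by
    intro i i' j h h'
    dsimp only at h h'
    split_ifs at h h' <;> simp only [Sum.inl.injEq, Fin.ext_iff] at h h' <;> omega⟩

/-- Transport a morphism along equalities of objects. -/
def castH {J J' I I' : ℕ} (hJ : J = J') (hI : I = I') (f : Hom J I) : Hom J' I' := by
  subst hJ; subst hI; exact f

/-- The generalised symmetry `(sym_{I0,1}|id_{I1}) ∈ □(I0+1+I1, 1+I0+I1)`. -/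
def symL : (I0 I1 : ℕ) → Hom (I0+1+I1) (1+I0+I1)
  | 0, I1 => idH (1+I1)
  | I0+1, I1 =>
    castH (by omega) (by omega)
      (compH (symH (I0+I1)) (castH rfl (by omega) (sucH (symL I0 I1))))

/-- The generalised symmetry `(sym_{1,I0}|id_{I1}) ∈ □(1+I0+I1, I0+1+I1)`. -/
def symR : (I0 I1 : ℕ) → Hom (1+I0+I1) (I0+1+I1)
  | 0, I1 => idH (1+I1)
  | I0+1, I1 =>
    castH (by omega) (by omega)
      (compH (castH (by omega) rfl (sucH (symR I0 I1))) (symH (I0+I1)))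

theorem compH_val {K J I : ℕ} (f : Hom J I) (g : Hom K J) (i : Fin I) :
    (compH f g).1 i = Sum.elim g.1 Sum.inr (f.1 i) := rfl

theorem idH_val (I : ℕ) (i : Fin I) : (idH I).1 i = Sum.inl i := rfl

theorem sucH_val {J I : ℕ} (f : Hom J I) (i : Fin (1+I)) :
    (sucH f).1 i = if h : (i : ℕ) = 0 then Sum.inl ⟨0, by omega⟩
      else Sum.elim (fun j => Sum.inl ⟨1 + j.1, by have := j.2; omega⟩) Sum.inr
        (f.1 ⟨i.1 - 1, by have := i.2; omega⟩) := rfl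

theorem sucH_id (I : ℕ) : sucH (idH I) = idH (1+I) := by
  apply Hom.ext
  funext i
  rw [sucH_val, idH_val]
  split_ifs with h
  · exact congrArg Sum.inl (Fin.ext (by simp [h]))
  · rw [idH_val]
    simp only [Sum.elim_inl]
    exact congrArg Sum.inl (Fin.ext (by have := i.2; simp; omega))

theorem sucH_comp {K J I : ℕ} (f : Hom J I) (g : Hom K J) :
    sucH (compH f g) = compH (sucH f) (sucH g) := by
  apply Hom.ext
  funext i
  rw [compH_val, sucH_val, sucH_val]
  split_ifs with h
  · rw [Sum.elim_inl, sucH_val]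
    rw [dif_pos rfl]
  · rw [compH_val]
    rcases hf : f.1 ⟨i.1 - 1, by have := i.2; omega⟩ with j | e
    · simp only [Sum.elim_inl]
      rw [sucH_val, dif_neg (by simp)]
      have hj : (⟨(⟨1 + j.1, by have := j.2; omega⟩ : Fin (1+J)).1 - 1,
          by simp⟩ : Fin J) = j := Fin.ext (by simp)
      rw [hj]
    · simp only [Sum.elim_inr]

/-- The BCH cube category: objects are natural numbers. -/
def Obj : Type := ℕ

/-- View a natural number as an object of the BCH cube category. -/
def mk (n : ℕ) : Obj := n

/-- View an object of the BCH cube category as a natural number. -/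
def un (n : Obj) : ℕ := n

instance : Category Obj where
  Hom J I := BCH.Hom J I
  id I := idH I
  comp {X Y Z} (u : BCH.Hom X Y) (v : BCH.Hom Y Z) := compH v u
  id_comp := by
    intro X Y u
    apply Hom.ext
    funext i
    show Sum.elim (idH X).1 Sum.inr (u.1 i) = u.1 i
    rcases h : u.1 i with j | e <;> simp [h, idH]
  comp_id := by
    intro X Y u
    apply Hom.ext
    funext i
    rfl
  assoc := by
    intro W X Y Z u v w
    apply Hom.ext
    funext i
    show Sum.elim (fun j => Sum.elim u.1 Sum.inr (v.1 j)) Sum.inr (w.1 i)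
       = Sum.elim u.1 Sum.inr (Sum.elim v.1 Sum.inr (w.1 i))
    rcases h : w.1 i with j | e <;> simp

/-- The functor `suc : □ ⥤ □`. -/
def sucFunctor : Obj ⥤ Obj where
  obj I := mk (1 + un I)
  map {J I} f := sucH f
  map_id I := sucH_id (un I)
  map_comp {K J I} g f := sucH_comp f g

theorem faceH_val (k : Fin 2) (I : ℕ) (i : Fin (1+I)) :
    (faceH k I).1 i = if h : (i : ℕ) = 0 then Sum.inr k
      else Sum.inl ⟨i.1 - 1, by have := i.2; omega⟩ := rfl

theorem degH_val (I : ℕ) (i : Fin I) :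
    (degH I).1 i = Sum.inl ⟨1 + i.1, by have := i.2; omega⟩ := rfl

theorem symH_val (I : ℕ) (i : Fin (1+(1+I))) :
    (symH I).1 i = if (i : ℕ) = 0 then Sum.inl ⟨1, by omega⟩
      else if (i : ℕ) = 1 then Sum.inl ⟨0, by omega⟩
      else Sum.inl i := rfl

theorem face_nat {J I : ℕ} (f : Hom J I) (k : Fin 2) :
    compH (faceH k I) f = compH (sucH f) (faceH k J) := by
  apply Hom.ext
  funext i
  rw [compH_val, compH_val, faceH_val, sucH_val]
  split_ifs with h
  · simp only [Sum.elim_inr, Sum.elim_inl]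
    rw [faceH_val, dif_pos rfl]
  · simp only [Sum.elim_inl]
    rcases hf : f.1 ⟨i.1 - 1, by have := i.2; omega⟩ with j | e
    · simp only [Sum.elim_inl]
      rw [faceH_val, dif_neg (by simp)]
      exact congrArg Sum.inl (Fin.ext (by simp))
    · simp only [Sum.elim_inr]

theorem deg_nat {J I : ℕ} (f : Hom J I) :
    compH (degH I) (sucH f) = compH f (degH J) := by
  apply Hom.ext
  funext i
  rw [compH_val, compH_val, degH_val]
  simp only [Sum.elim_inl]
  rw [sucH_val, dif_neg (by simp)]
  have hi : (⟨((⟨1 + i.1, by have := i.2; omega⟩ : Fin (1+I)) : ℕ) - 1,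
      by exact (by have := i.2; omega : 1 + i.1 - 1 < I)⟩ : Fin I) = i :=
    Fin.ext (by simp)
  rw [hi]
  rcases hf : f.1 i with j | e
  · simp only [Sum.elim_inl]
    rw [degH_val]
  · simp only [Sum.elim_inr]

set_option maxHeartbeats 1000000 in
theorem sym_nat {J I : ℕ} (f : Hom J I) :
    compH (symH I) (sucH (sucH f)) = compH (sucH (sucH f)) (symH J) := by
  apply Hom.ext
  funext i
  rw [compH_val, compH_val, symH_val]
  by_cases h0 : (i : ℕ) = 0
  · rw [if_pos h0]
    have hv : (sucH (sucH f)).1 i = Sum.inl ⟨0, by omega⟩ := by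
      rw [sucH_val, dif_pos h0]
    have h2 : (sucH f).1 ⟨((⟨1, by omega⟩ : Fin (1+(1+I))) : ℕ) - 1,
        by exact (by omega : (1:ℕ) - 1 < 1 + I)⟩ = Sum.inl ⟨0, by omega⟩ := by
      rw [sucH_val, dif_pos (by simp)]
    have hv1 : (sucH (sucH f)).1 ⟨1, by omega⟩ = Sum.inl ⟨1, by omega⟩ := by
      rw [sucH_val, dif_neg (by simp), h2, Sum.elim_inl]
      exact congrArg Sum.inl (Fin.ext (by simp))
    rw [Sum.elim_inl, hv1, hv, Sum.elim_inl, symH_val, if_pos rfl]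
  · rw [if_neg h0]
    by_cases h1 : (i : ℕ) = 1
    · rw [if_pos h1]
      have h2 : (sucH f).1 ⟨i.1 - 1, by have := i.2; omega⟩ = Sum.inl ⟨0, by omega⟩ := by
        rw [sucH_val, dif_pos (by simp [h1])]
      have hv : (sucH (sucH f)).1 i = Sum.inl ⟨1, by omega⟩ := by
        rw [sucH_val, dif_neg h0, h2, Sum.elim_inl]
        exact congrArg Sum.inl (Fin.ext (by simp))
      have hv0 : (sucH (sucH f)).1 ⟨0, by omega⟩ = Sum.inl ⟨0, by omega⟩ := by
        rw [sucH_val, dif_pos (by simp)]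
      rw [Sum.elim_inl, hv0, hv, Sum.elim_inl, symH_val, if_neg (by simp), if_pos rfl]
    · rw [if_neg h1]
      have harg : (⟨((⟨i.1 - 1, by have := i.2; omega⟩ : Fin (1+I)) : ℕ) - 1,
          by exact (by have := i.2; omega : i.1 - 1 - 1 < I)⟩ : Fin I)
          = ⟨i.1 - 1 - 1, by have := i.2; omega⟩ :=
        Fin.ext (by simp)
      rcases hf : f.1 ⟨i.1 - 1 - 1, by have := i.2; omega⟩ with j | e
      · have h2 : (sucH f).1 ⟨i.1 - 1, by have := i.2; omega⟩
            = Sum.inl ⟨1 + j.1, by have := j.2; omega⟩ := by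
          rw [sucH_val, dif_neg (by exact (by omega : ¬(i.1 - 1 = 0))), harg, hf, Sum.elim_inl]
        have hv : (sucH (sucH f)).1 i
            = Sum.inl ⟨1 + (1 + j.1), by have := j.2; omega⟩ := by
          rw [sucH_val, dif_neg h0, h2, Sum.elim_inl]
        rw [Sum.elim_inl, hv, Sum.elim_inl, symH_val, if_neg (by simp), if_neg (by simp)]
      · have h2 : (sucH f).1 ⟨i.1 - 1, by have := i.2; omega⟩ = Sum.inr e := by
          rw [sucH_val, dif_neg (by exact (by omega : ¬(i.1 - 1 = 0))), harg, hf, Sum.elim_inr]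
        have hv : (sucH (sucH f)).1 i = Sum.inr e := by
          rw [sucH_val, dif_neg h0, h2, Sum.elim_inr]
        rw [Sum.elim_inl, hv, Sum.elim_inr]

/-- The face map as a morphism of the cube category. -/
def faceA (k : Fin 2) (I : ℕ) : mk I ⟶ mk (1+I) := faceH k I

/-- The degeneracy as a morphism of the cube category. -/
def degA (I : ℕ) : mk (1+I) ⟶ mk I := degH I

/-- The symmetry as a morphism of the cube category. -/
def symA (I : ℕ) : mk (1+(1+I)) ⟶ mk (1+(1+I)) := symH I

theorem faceA_nat {J I : ℕ} (f : mk J ⟶ mk I) (k : Fin 2) :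
    f ≫ faceA k I = faceA k J ≫ sucFunctor.map f := face_nat f k

theorem degA_nat {J I : ℕ} (f : mk J ⟶ mk I) :
    sucFunctor.map f ≫ degA I = degA J ≫ f := deg_nat f

theorem symA_nat {J I : ℕ} (f : mk J ⟶ mk I) :
    sucFunctor.map (sucFunctor.map f) ≫ symA I = symA J ≫ sucFunctor.map (sucFunctor.map f) :=
  sym_nat f

/-- The precomposition endofunctor `∀̂` on presheaves over the BCH cube category. -/
def forallP : (Objᵒᵖ ⥤ Type) ⥤ (Objᵒᵖ ⥤ Type) :=
  (Functor.whiskeringLeft Objᵒᵖ Objᵒᵖ Type).obj sucFunctor.op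

/-- The natural transformation `k̂_Γ : ∀̂Γ ⟶ Γ`. -/
def kHat (k : Fin 2) (Γ : Objᵒᵖ ⥤ Type) : forallP.obj Γ ⟶ Γ where
  app X := Γ.map ((faceA k (un X.unop)).op)
  naturality := by
    intro X Y g
    show Γ.map (sucFunctor.map g.unop).op ≫ Γ.map (faceA k (un Y.unop)).op
        = Γ.map (faceA k (un X.unop)).op ≫ Γ.map g
    erw [← Γ.map_comp, ← Γ.map_comp]
    congr 1
    have h := congrArg Quiver.Hom.op (faceA_nat g.unop k)
    erw [op_comp, op_comp] at h
    exact h.symm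

/-- The natural transformation `R̂_Γ : Γ ⟶ ∀̂Γ`. -/
def RHat (Γ : Objᵒᵖ ⥤ Type) : Γ ⟶ forallP.obj Γ where
  app X := Γ.map ((degA (un X.unop)).op)
  naturality := by
    intro X Y g
    show Γ.map g ≫ Γ.map (degA (un Y.unop)).op
        = Γ.map (degA (un X.unop)).op ≫ Γ.map (sucFunctor.map g.unop).op
    erw [← Γ.map_comp, ← Γ.map_comp]
    congr 1
    have h := congrArg Quiver.Hom.op (degA_nat g.unop)
    erw [op_comp, op_comp] at h
    exact h.symm

/-- The natural transformation `Ŝ_Γ : ∀̂∀̂Γ ⟶ ∀̂∀̂Γ`. -/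
def SHat (Γ : Objᵒᵖ ⥤ Type) : forallP.obj (forallP.obj Γ) ⟶ forallP.obj (forallP.obj Γ) where
  app X := Γ.map ((symA (un X.unop)).op)
  naturality := by
    intro X Y g
    show Γ.map (sucFunctor.map (sucFunctor.map g.unop)).op ≫ Γ.map (symA (un Y.unop)).op
        = Γ.map (symA (un X.unop)).op ≫ Γ.map (sucFunctor.map (sucFunctor.map g.unop)).op
    erw [← Γ.map_comp, ← Γ.map_comp]
    congr 1
    have h := congrArg Quiver.Hom.op (symA_nat g.unop)
    erw [op_comp, op_comp] at h
    exact h.symm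


/-!
Induction on `I`. Every `f ∈ □(J,0)` is a composite of degeneracies. A map `f ∈ □(J,1+I)`
splits off its first coordinate through `suc`: if `f 0 = inr k`
then `f = suc (tail f) ∘ k_J`; if `f 0 = inl j₀` then `f = suc g ∘ σ`, where the cyclic
permutation `σ` (built from symmetries by `symL`) brings the coordinate `j₀` to the front and
`g` is `tail f` with the coordinate `j₀`, which it never reads by injectivity, deleted by a face.
-/

theorem castH_val {J J' I I' : ℕ} (hJ : J = J') (hI : I = I') (f : Hom J I) (i : Fin I') :
    (castH hJ hI f).1 i = Sum.map (Fin.cast hJ) id (f.1 (Fin.cast hI.symm i)) := by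
  subst hJ hI
  show f.1 i = Sum.map (Fin.cast rfl) id (f.1 i)
  cases f.1 i <;> rfl

theorem compH_idH {J I : ℕ} (f : Hom J I) : compH f (idH J) = f :=
  Hom.ext (funext fun i => by rw [compH_val]; cases f.1 i <;> rfl)

theorem compH_assoc {L K J I : ℕ} (f : Hom J I) (g : Hom K J) (h : Hom L K) :
    compH (compH f g) h = compH f (compH g h) :=
  Hom.ext (funext fun i => by simp only [compH_val]; cases f.1 i <;> rfl)

theorem sucH_val_natAdd {J I : ℕ} (f : Hom J I) (i : Fin I) :
    (sucH f).1 (Fin.natAdd 1 i) = Sum.map (Fin.natAdd 1) id (f.1 i) := by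
  rw [sucH_val, dif_neg (by simp)]
  simp only [Fin.val_natAdd, Nat.add_sub_cancel_left, Fin.eta]
  cases f.1 i <;> rfl

def Hom.tail {J I : ℕ} (f : Hom J (1+I)) : Hom J I :=
  ⟨fun i => f.1 (Fin.natAdd 1 i), fun _ _ _ h h' => (Fin.natAdd_inj 1).mp (f.2 h h')⟩

theorem Hom.ext_one_add {J I : ℕ} {f g : Hom J (1+I)}
    (hzero : f.1 ⟨0, by omega⟩ = g.1 ⟨0, by omega⟩) (htail : f.tail = g.tail) : f = g := by
  refine Hom.ext (funext fun i => ?_)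
  by_cases hi : (i : ℕ) = 0
  · rwa [show i = ⟨0, by omega⟩ from Fin.ext hi]
  · obtain ⟨i, rfl⟩ : ∃ i' : Fin I, i = Fin.natAdd 1 i' :=
      ⟨⟨i - 1, by omega⟩, Fin.ext (by simp only [Fin.val_natAdd]; omega)⟩
    exact congrArg (·.1 i) htail

theorem tail_compH_sucH {K J I : ℕ} (g : Hom J I) (h : Hom K (1+J)) :
    (compH (sucH g) h).tail = compH g h.tail :=
  Hom.ext (funext fun i => by
    simp only [Hom.tail, compH_val, sucH_val_natAdd, Sum.elim_map]; rfl)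

theorem eq_compH_sucH {K J I : ℕ} {f : Hom K (1+I)} {g : Hom J I} {h : Hom K (1+J)}
    (hzero : f.1 ⟨0, by omega⟩ = h.1 ⟨0, by omega⟩) (htail : f.tail = compH g h.tail) :
    f = compH (sucH g) h :=
  Hom.ext_one_add hzero (htail.trans (tail_compH_sucH g h).symm)

theorem faceH_tail (k : Fin 2) (I : ℕ) : (faceH k I).tail = idH I :=
  Hom.ext (funext fun i => by simp [Hom.tail, faceH_val, idH_val])

theorem eq_compH_sucH_faceH {J I : ℕ} {f : Hom J (1+I)} {k : Fin 2}
    (hk : f.1 ⟨0, by omega⟩ = Sum.inr k) : f = compH (sucH f.tail) (faceH k J) :=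
  eq_compH_sucH hk (by rw [faceH_tail, compH_idH])

theorem symL_val : ∀ (I₀ I₁ : ℕ) (k : Fin (1+I₀+I₁)),
    (symL I₀ I₁).1 k = Sum.inl ⟨if k.1 = 0 then I₀ else if k.1 ≤ I₀ then k.1 - 1 else k.1,
      by have := k.2; split_ifs <;> omega⟩
  | 0, _, k => by
    simp only [symL, idH_val, Sum.inl.injEq, Fin.ext_iff]
    split_ifs <;> omega
  | I₀ + 1, I₁, k => by
    rw [symL, castH_val, compH_val, symH_val]
    simp only [Fin.val_cast]
    split_ifs <;> simp [castH_val, sucH_val, symL_val, Fin.ext_iff, *] <;> (try split_ifs) <;> omega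

def faceAt (k : Fin 2) {J : ℕ} (j₀ : Fin J) : Hom (J-1) J :=
  ⟨fun j => if h : j = j₀ then Sum.inr k
    else Sum.inl ⟨if j.1 < j₀ then j else j - 1, by
      have := j.2; have := j₀.2; have := Fin.val_ne_of_ne h; split_ifs <;> omega⟩, by
    intro j j' m h h'
    dsimp only at h h'
    by_cases hj : j = j₀
    · simp [hj] at h
    by_cases hj' : j' = j₀
    · simp [hj'] at h'
    simp only [hj, hj', ↓reduceDIte, Sum.inl.injEq, Fin.ext_iff] at h h'
    have := Fin.val_ne_of_ne hj
    have := Fin.val_ne_of_ne hj'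
    exact Fin.ext (by split_ifs at h h' <;> omega)⟩

theorem faceAt_val_of_ne (k : Fin 2) {J : ℕ} {j₀ j : Fin J} (hj : j ≠ j₀) :
    (faceAt k j₀).1 j = Sum.inl ⟨if j.1 < j₀ then j else j - 1, by
      have := j.2; have := j₀.2; have := Fin.val_ne_of_ne hj; split_ifs <;> omega⟩ := by
  unfold faceAt
  exact dif_neg hj

def cycleH {J : ℕ} (j₀ : Fin J) : Hom J (1+(J-1)) :=
  castH (by have := j₀.2; omega) (by have := j₀.2; omega) (symL j₀ (J-1-j₀))

theorem cycleH_val_zero {J : ℕ} (j₀ : Fin J) : (cycleH j₀).1 ⟨0, by omega⟩ = Sum.inl j₀ := by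
  simp [cycleH, castH_val, symL_val]

theorem cycleH_tail_val {J : ℕ} (j₀ : Fin J) (j : Fin (J-1)) :
    (cycleH j₀).tail.1 j = Sum.inl ⟨if j.1 < j₀ then j else j + 1, by
      have := j.2; split_ifs <;> omega⟩ := by
  simp only [Hom.tail, cycleH, castH_val, symL_val, Fin.val_cast, Fin.val_natAdd]
  simp only [Sum.map_inl, Sum.inl.injEq, Fin.ext_iff, Fin.val_cast]
  split_ifs <;> omega

theorem compH_faceAt_tail_cycleH {J : ℕ} (k : Fin 2) {j₀ j : Fin J} (hj : j ≠ j₀) :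
    (compH (faceAt k j₀) (cycleH j₀).tail).1 j = Sum.inl j := by
  rw [compH_val, faceAt_val_of_ne k hj, Sum.elim_inl, cycleH_tail_val]
  have := Fin.val_ne_of_ne hj
  simp only [Sum.inl.injEq, Fin.ext_iff]
  split_ifs <;> omega

theorem eq_compH_sucH_cycleH {J I : ℕ} {f : Hom J (1+I)} {j₀ : Fin J}
    (hj₀ : f.1 ⟨0, by omega⟩ = Sum.inl j₀) :
    f = compH (sucH (compH f.tail (faceAt 0 j₀))) (cycleH j₀) := by
  refine eq_compH_sucH (hj₀.trans (cycleH_val_zero j₀).symm) ?_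
  rw [compH_assoc]
  refine Hom.ext (funext fun i => ?_)
  rw [compH_val]
  rcases hf : f.tail.1 i with j | e
  · have hj : j ≠ j₀ := by
      rintro rfl
      simpa [Fin.ext_iff] using f.2 hf hj₀
    rw [Sum.elim_inl, compH_faceAt_tail_cycleH 0 hj]
  · rfl

instance {J : ℕ} : Unique (Hom J 0) where
  default := ⟨Fin.elim0, fun i => i.elim0⟩
  uniq _ := Hom.ext (funext fun i => i.elim0)

inductive Generated : {J I : ℕ} → Hom J I → Prop
  | id (I : ℕ) : Generated (idH I)
  | face (k : Fin 2) (I : ℕ) : Generated (faceH k I)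
  | deg (I : ℕ) : Generated (degH I)
  | sym (I : ℕ) : Generated (symH I)
  | comp {K J I : ℕ} {f : Hom J I} {g : Hom K J} : Generated f → Generated g → Generated (compH f g)
  | suc {J I : ℕ} {f : Hom J I} : Generated f → Generated (sucH f)

namespace Generated

theorem castH {J J' I I' : ℕ} {f : Hom J I} (hf : Generated f) (hJ : J = J') (hI : I = I') :
    Generated (castH hJ hI f) := by
  subst hJ hI
  exact hf

theorem symL : ∀ I₀ I₁ : ℕ, Generated (symL I₀ I₁)
  | 0, I₁ => id (1+I₁)
  | I₀ + 1, I₁ => ((sym _).comp ((symL I₀ I₁).suc.castH _ _)).castH _ _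

theorem cycleH {J : ℕ} (j₀ : Fin J) : Generated (cycleH j₀) :=
  (symL _ _).castH _ _

theorem of_hom_zero : ∀ {J : ℕ} (f : Hom J 0), Generated f
  | 0, f => Subsingleton.elim (idH 0) f ▸ id 0
  | J + 1, f =>
    Subsingleton.elim (BCH.castH (Nat.add_comm 1 J) rfl (compH default (degH J))) f ▸
      ((of_hom_zero default).comp (deg J)).castH _ _

theorem mem {G : (J I : ℕ) → Set (Hom J I)} (hid : ∀ I, idH I ∈ G I I)
    (hface : ∀ (k : Fin 2) (I : ℕ), faceH k I ∈ G I (1+I)) (hdeg : ∀ I, degH I ∈ G (1+I) I)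
    (hsym : ∀ I, symH I ∈ G (1+(1+I)) (1+(1+I)))
    (hcomp : ∀ (K J I : ℕ) (f : Hom J I) (g : Hom K J), f ∈ G J I → g ∈ G K J → compH f g ∈ G K I)
    (hsuc : ∀ (J I : ℕ) (f : Hom J I), f ∈ G J I → sucH f ∈ G (1+J) (1+I))
    {J I : ℕ} {f : Hom J I} (hf : Generated f) : f ∈ G J I := by
  induction hf with
  | id I => exact hid I
  | face k I => exact hface k I
  | deg I => exact hdeg I
  | sym I => exact hsym I
  | comp _ _ ihf ihg => exact hcomp _ _ _ _ _ ihf ihg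
  | suc _ ih => exact hsuc _ _ _ ih

end Generated

theorem Hom.generated {J I : ℕ} (f : Hom J I) : Generated f := by
  induction I generalizing J with
  | zero => exact Generated.of_hom_zero f
  | succ I ih =>
    revert f
    suffices ∀ f : Hom J (1+I), Generated f from Nat.add_comm 1 I ▸ this
    intro f
    rcases hf : f.1 ⟨0, by omega⟩ with j₀ | k
    · rw [eq_compH_sucH_cycleH hf]
      exact (ih _).suc.comp (.cycleH j₀)
    · rw [eq_compH_sucH_faceH hf]
      exact (ih _).suc.comp (.face k J)

/-- every family of subsets of the hom-sets of `□` containing the identities,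
faces, degeneracies and symmetries and closed under composition and `suc` exhausts all of `□`;
hence the smallest such family is all of `□`. -/
theorem generation :
    ∀ G : (J I : ℕ) → Set (Hom J I),
      (∀ I, idH I ∈ G I I) →
      (∀ (k : Fin 2) (I : ℕ), faceH k I ∈ G I (1+I)) →
      (∀ I, degH I ∈ G (1+I) I) →
      (∀ I, symH I ∈ G (1+(1+I)) (1+(1+I))) →
      (∀ (K J I : ℕ) (f : Hom J I) (g : Hom K J), f ∈ G J I → g ∈ G K J → compH f g ∈ G K I) →
      (∀ (J I : ℕ) (f : Hom J I), f ∈ G J I → sucH f ∈ G (1+J) (1+I)) →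
      ∀ (J I : ℕ) (f : Hom J I), f ∈ G J I :=
  fun _ hid hface hdeg hsym hcomp hsuc _ _ f => f.generated.mem hid hface hdeg hsym hcomp hsuc

end BCH
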